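/- arXiv:1712.02292 — 2 statements merged into one kernel-verified Lean document; each statement's English description precedes it below -/
import Mathlib

section
/- Let V be a finite-dimensional real inner product space, let ε⁰ ∈ V with ε⁰ ≠ 0, and let W̃ : V → ℝ be a continuous function with W̃(ε⁰) > 0. Let (cₙ) be a sequence of nonnegative real numbers with cₙ → 0, and for each n let Sₙ : V → V be a self-adjoint positive definite linear operator such that: (i) W̃(ε) ≤ ⟨ε, Sₙ⁻¹ε⟩ for every ε ∈ V; (ii) ⟨ε⁰, Sₙ⁻¹ε⁰⟩ ≤ W̃(ε⁰) + cₙ; (iii) ⟨s, Sₙs⟩ ≤ cₙ‖s‖² for every s ∈ V with ⟨s, ε⁰⟩ = 0. Then for every σ⁰ ∈ V with ⟨ε⁰, σ⁰⟩ = W̃(ε⁰), the sequence Sₙσ⁰ converges to ε⁰ in V. -/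
/-
Write `m = ‖ε⁰‖²` and `aₙ = ⟪ε⁰, Sₙ ε⁰⟫`. Cauchy–Schwarz for the positive form of `Sₙ`
gives `m² ≤ aₙ ⟪ε⁰, Sₙ⁻¹ ε⁰⟫ ≤ aₙ (W̃ ε⁰ + cₙ)`. Smallness on `ε⁰^⊥` makes `Sₙ ε⁰` nearly
parallel to `ε⁰`, so the strain `(m / aₙ) Sₙ ε⁰`, whose energy is `m² / aₙ`, tends to `ε⁰`;
the bound `W̃ ≤ energy` and continuity of `W̃` then give `aₙ → m² / W̃ ε⁰`. With `aₙ` bounded,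
the forms of `Sₙ` are uniformly bounded, hence `Sₙ s → 0` for `s ⊥ ε⁰`, and `Sₙ` converges
pointwise to the rank-one map `v ↦ (⟪ε⁰, v⟫ / W̃ ε⁰) ε⁰`, which sends `σ⁰` to `ε⁰`.
-/

open scoped RealInnerProductSpace

open Filter Topology

section

variable {ι : Type*} {l : Filter ι} {V : Type*} [NormedAddCommGroup V] [InnerProductSpace ℝ V]

theorem tendsto_of_norm_sub_sq_le {E : Type*} [SeminormedAddCommGroup E] {y : ι → E} {y₀ : E}
    {u : ι → ℝ} (hu : Tendsto u l (𝓝 0)) (h : ∀ i, ‖y i - y₀‖ ^ 2 ≤ u i) :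
    Tendsto y l (𝓝 y₀) := by
  rw [tendsto_iff_norm_sub_tendsto_zero]
  have hsqrt : Tendsto (fun i => √(u i)) l (𝓝 0) := by simpa using hu.sqrt
  refine squeeze_zero (fun i => norm_nonneg _) (fun i => ?_) hsqrt
  exact (Real.le_sqrt (norm_nonneg _) ((sq_nonneg _).trans (h i))).2 (h i)

theorem tendsto_of_mul_le_of_le_mul {a f g : ι → ℝ} {M W : ℝ} (hW : 0 < W)
    (hf : Tendsto f l (𝓝 W)) (hg : Tendsto g l (𝓝 W))
    (hup : ∀ i, a i * f i ≤ M) (hlow : ∀ i, M ≤ a i * g i) : Tendsto a l (𝓝 (M / W)) := by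
  refine tendsto_of_tendsto_of_tendsto_of_le_of_le' (tendsto_const_nhds.div hg hW.ne')
    (tendsto_const_nhds.div hf hW.ne') ?_ ?_
  · filter_upwards [hg.eventually_const_lt hW] with i hi
    exact (div_le_iff₀ hi).2 (hlow i)
  · filter_upwards [hf.eventually_const_lt hW] with i hi
    exact (le_div_iff₀ hi).2 (hup i)

theorem inner_sub_smul_inner_div_norm_sq_eq_zero (x v : V) :
    ⟪v - (⟪x, v⟫ / ‖x‖ ^ 2) • x, x⟫ = 0 := by
  rcases eq_or_ne x 0 with rfl | hx
  · simp
  · rw [inner_sub_left, real_inner_smul_left, real_inner_self_eq_norm_sq, real_inner_comm]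
    field_simp
    ring

namespace LinearMap.IsPositive

variable {T : V →ₗ[ℝ] V}

theorem inner_map_sq_le (hT : T.IsPositive) (u v : V) :
    ⟪u, T v⟫ ^ 2 ≤ ⟪u, T u⟫ * ⟪v, T v⟫ := by
  have hvu : ⟪v, T u⟫ = ⟪u, T v⟫ := by rw [← hT.isSymmetric, real_inner_comm]
  have hquad (t : ℝ) : 0 ≤ ⟪v, T v⟫ * (t * t) + 2 * ⟪u, T v⟫ * t + ⟪u, T u⟫ := by
    have h := hT.inner_nonneg_right (u + t • v)
    simp only [map_add, map_smul, inner_add_left, inner_add_right, real_inner_smul_left,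
      real_inner_smul_right, hvu] at h
    linarith
  have := discrim_le_zero hquad
  rw [discrim] at this
  nlinarith

theorem inner_map_add_le (hT : T.IsPositive) (u v : V) :
    ⟪u + v, T (u + v)⟫ ≤ 2 * (⟪u, T u⟫ + ⟪v, T v⟫) := by
  have h := hT.inner_nonneg_right (u - v)
  simp only [map_add, map_sub, inner_add_left, inner_add_right, inner_sub_left,
    inner_sub_right] at h ⊢
  linarith

theorem norm_map_sq_le {K : ℝ} (hT : T.IsPositive) (hK₀ : 0 ≤ K)
    (hK : ∀ v, ⟪v, T v⟫ ≤ K * ‖v‖ ^ 2) (u : V) : ‖T u‖ ^ 2 ≤ K * ⟪u, T u⟫ := by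
  have hcs : (‖T u‖ ^ 2) ^ 2 ≤ ‖T u‖ ^ 2 * (K * ⟪u, T u⟫) := by
    calc (‖T u‖ ^ 2) ^ 2 = ⟪T u, T u⟫ ^ 2 := by rw [real_inner_self_eq_norm_sq]
      _ ≤ ⟪T u, T (T u)⟫ * ⟪u, T u⟫ := hT.inner_map_sq_le _ _
      _ ≤ K * ‖T u‖ ^ 2 * ⟪u, T u⟫ := by gcongr; exacts [hT.inner_nonneg_right u, hK _]
      _ = _ := by ring
  nlinarith [sq_nonneg ‖T u‖, hT.inner_nonneg_right u, mul_nonneg hK₀ (hT.inner_nonneg_right u)]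

variable {x : V} {c : ℝ}

theorem norm_map_sub_smul_sq_le (hT : T.IsPositive) (hc : 0 ≤ c)
    (hsmall : ∀ s, ⟪s, x⟫ = 0 → ⟪s, T s⟫ ≤ c * ‖s‖ ^ 2) :
    ‖T x - (⟪x, T x⟫ / ‖x‖ ^ 2) • x‖ ^ 2 ≤ c * ⟪x, T x⟫ := by
  set b := T x - (⟪x, T x⟫ / ‖x‖ ^ 2) • x
  have hb : ⟪b, x⟫ = 0 := inner_sub_smul_inner_div_norm_sq_eq_zero x (T x)
  have hnorm : ‖b‖ ^ 2 = ⟪b, T x⟫ := by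
    rw [← real_inner_self_eq_norm_sq]
    simp only [b, inner_sub_right, real_inner_smul_right, hb, mul_zero, sub_zero]
  have hcs : (‖b‖ ^ 2) ^ 2 ≤ ‖b‖ ^ 2 * (c * ⟪x, T x⟫) := by
    calc (‖b‖ ^ 2) ^ 2 = ⟪b, T x⟫ ^ 2 := by rw [hnorm]
      _ ≤ ⟪b, T b⟫ * ⟪x, T x⟫ := hT.inner_map_sq_le b x
      _ ≤ c * ‖b‖ ^ 2 * ⟪x, T x⟫ := by gcongr; exacts [hT.inner_nonneg_right x, hsmall b hb]
      _ = _ := by ring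
  nlinarith [sq_nonneg ‖b‖, hT.inner_nonneg_right x, mul_nonneg hc (hT.inner_nonneg_right x)]

theorem inner_map_le_of_forall_orthogonal (hT : T.IsPositive) (hc : 0 ≤ c)
    (hsmall : ∀ s, ⟪s, x⟫ = 0 → ⟪s, T s⟫ ≤ c * ‖s‖ ^ 2) (v : V) :
    ⟪v, T v⟫ ≤ 2 * (⟪x, T x⟫ / ‖x‖ ^ 2 + c) * ‖v‖ ^ 2 := by
  set t := ⟪x, v⟫ / ‖x‖ ^ 2
  set s := v - t • x
  have hs : ⟪s, x⟫ = 0 := inner_sub_smul_inner_div_norm_sq_eq_zero x v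
  have hv : v = t • x + s := by simp [s]
  have hpyth : ‖v‖ ^ 2 = t ^ 2 * ‖x‖ ^ 2 + ‖s‖ ^ 2 := by
    rw [hv, norm_add_sq_real, real_inner_smul_left, real_inner_comm, hs, norm_smul, mul_pow,
      Real.norm_eq_abs, sq_abs]
    ring
  have hpar : t ^ 2 * ⟪x, T x⟫ ≤ ⟪x, T x⟫ / ‖x‖ ^ 2 * ‖v‖ ^ 2 := by
    rcases eq_or_ne x 0 with rfl | hx
    · simp
    · calc t ^ 2 * ⟪x, T x⟫ = ⟪x, T x⟫ / ‖x‖ ^ 2 * (t ^ 2 * ‖x‖ ^ 2) := by field_simp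
        _ ≤ _ := by gcongr; exacts [div_nonneg (hT.inner_nonneg_right x) (sq_nonneg _),
            hpyth ▸ le_add_of_nonneg_right (sq_nonneg _)]
  calc ⟪v, T v⟫ ≤ 2 * (⟪t • x, T (t • x)⟫ + ⟪s, T s⟫) := hv ▸ hT.inner_map_add_le _ _
    _ ≤ 2 * (⟪x, T x⟫ / ‖x‖ ^ 2 * ‖v‖ ^ 2 + c * ‖v‖ ^ 2) := by
      have hsv : ‖s‖ ^ 2 ≤ ‖v‖ ^ 2 := hpyth ▸ le_add_of_nonneg_left (by positivity)
      rw [map_smul, real_inner_smul_left, real_inner_smul_right, ← mul_assoc, ← sq]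
      gcongr
      exact (hsmall s hs).trans (by gcongr)
    _ = _ := by ring

theorem sq_norm_sq_le_inner_map_mul_inner_symm {e : V ≃ₗ[ℝ] V}
    (he : (e : V →ₗ[ℝ] V).IsPositive) (x : V) :
    (‖x‖ ^ 2) ^ 2 ≤ ⟪x, e x⟫ * ⟪x, e.symm x⟫ := by
  have h := he.inner_map_sq_le x (e.symm x)
  simp only [LinearEquiv.coe_coe, LinearEquiv.apply_symm_apply,
    real_inner_self_eq_norm_sq] at h
  rwa [real_inner_comm x (e.symm x)] at h

end LinearMap.IsPositive

variable {T : ι → V →ₗ[ℝ] V} {c : ι → ℝ} {x : V} {A : ℝ}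

theorem tendsto_map_self_of_tendsto_inner (hT : ∀ i, (T i).IsPositive) (hc : ∀ i, 0 ≤ c i)
    (hc₀ : Tendsto c l (𝓝 0)) (hsmall : ∀ i s, ⟪s, x⟫ = 0 → ⟪s, T i s⟫ ≤ c i * ‖s‖ ^ 2)
    (ha : Tendsto (fun i => ⟪x, T i x⟫) l (𝓝 A)) :
    Tendsto (fun i => T i x) l (𝓝 ((A / ‖x‖ ^ 2) • x)) := by
  have hdefect : Tendsto (fun i => T i x - (⟪x, T i x⟫ / ‖x‖ ^ 2) • x) l (𝓝 0) :=
    tendsto_of_norm_sub_sq_le (by simpa using hc₀.mul ha) fun i => by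
      simpa using (hT i).norm_map_sub_smul_sq_le (hc i) (hsmall i)
  convert hdefect.add ((ha.div_const (‖x‖ ^ 2)).smul_const x) using 2
  · rw [sub_add_cancel]
  · rw [zero_add]

theorem tendsto_map_of_inner_eq_zero (hT : ∀ i, (T i).IsPositive) (hc : ∀ i, 0 ≤ c i)
    (hc₀ : Tendsto c l (𝓝 0)) (hsmall : ∀ i s, ⟪s, x⟫ = 0 → ⟪s, T i s⟫ ≤ c i * ‖s‖ ^ 2)
    (ha : Tendsto (fun i => ⟪x, T i x⟫) l (𝓝 A)) {s : V} (hs : ⟪s, x⟫ = 0) :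
    Tendsto (fun i => T i s) l (𝓝 0) := by
  set K := fun i => 2 * (⟪x, T i x⟫ / ‖x‖ ^ 2 + c i)
  have hK : Tendsto K l (𝓝 (2 * (A / ‖x‖ ^ 2 + 0))) :=
    ((ha.div_const _).add hc₀).const_mul 2
  refine tendsto_of_norm_sub_sq_le (u := fun i => K i * (c i * ‖s‖ ^ 2))
    (by simpa using hK.mul (hc₀.mul_const _)) fun i => ?_
  have hK₀ : 0 ≤ K i := mul_nonneg zero_le_two
    (add_nonneg (div_nonneg ((hT i).inner_nonneg_right x) (sq_nonneg _)) (hc i))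
  have hform := (hT i).inner_map_le_of_forall_orthogonal (hc i) (hsmall i)
  rw [sub_zero]
  exact ((hT i).norm_map_sq_le hK₀ hform s).trans (mul_le_mul_of_nonneg_left (hsmall i s hs) hK₀)

theorem tendsto_map_of_tendsto_inner (hT : ∀ i, (T i).IsPositive) (hc : ∀ i, 0 ≤ c i)
    (hc₀ : Tendsto c l (𝓝 0)) (hsmall : ∀ i s, ⟪s, x⟫ = 0 → ⟪s, T i s⟫ ≤ c i * ‖s‖ ^ 2)
    (ha : Tendsto (fun i => ⟪x, T i x⟫) l (𝓝 A)) (v : V) :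
    Tendsto (fun i => T i v) l (𝓝 ((⟪x, v⟫ * A / (‖x‖ ^ 2) ^ 2) • x)) := by
  have hlim := ((tendsto_map_self_of_tendsto_inner hT hc hc₀ hsmall ha).const_smul
    (⟪x, v⟫ / ‖x‖ ^ 2)).add
    (tendsto_map_of_inner_eq_zero hT hc hc₀ hsmall ha
      (inner_sub_smul_inner_div_norm_sq_eq_zero x v))
  convert hlim using 1
  · ext i
    rw [← map_smul, ← map_add, add_sub_cancel]
  · rw [add_zero, smul_smul, div_mul_div_comm, ← sq]

theorem tendsto_inner_map_self {S : ι → V ≃ₗ[ℝ] V} {W : V → ℝ} (hx : x ≠ 0)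
    (hW : ContinuousAt W x) (hWx : 0 < W x) (hc : ∀ i, 0 ≤ c i) (hc₀ : Tendsto c l (𝓝 0))
    (hS : ∀ i, (S i : V →ₗ[ℝ] V).IsPositive)
    (hbound : ∀ i ε, W ε ≤ ⟪ε, (S i).symm ε⟫) (hattain : ∀ i, ⟪x, (S i).symm x⟫ ≤ W x + c i)
    (hsmall : ∀ i s, ⟪s, x⟫ = 0 → ⟪s, S i s⟫ ≤ c i * ‖s‖ ^ 2) :
    Tendsto (fun i => ⟪x, S i x⟫) l (𝓝 ((‖x‖ ^ 2) ^ 2 / W x)) := by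
  set m := ‖x‖ ^ 2
  have hm : 0 < m := by positivity
  have hlow (i : ι) : m ^ 2 ≤ ⟪x, S i x⟫ * (W x + c i) :=
    ((hS i).sq_norm_sq_le_inner_map_mul_inner_symm x).trans
      (mul_le_mul_of_nonneg_left (hattain i) ((hS i).inner_nonneg_right x))
  have ha (i : ι) : 0 < ⟪x, S i x⟫ :=
    pos_of_mul_pos_left ((pow_pos hm 2).trans_le (hlow i)) (by linarith [hc i])
  -- test strain for the energy bound: its energy is `m ^ 2 / ⟪x, S i x⟫`
  set e := fun i => (m / ⟪x, S i x⟫) • S i x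
  have he_lim : Tendsto e l (𝓝 x) := by
    refine tendsto_of_norm_sub_sq_le (u := fun i => c i * (W x + c i))
      (by simpa using hc₀.mul (tendsto_const_nhds.add hc₀)) fun i => ?_
    have hdefect := (hS i).norm_map_sub_smul_sq_le (hc i) (hsmall i)
    simp only [LinearEquiv.coe_coe] at hdefect
    set a := ⟪x, S i x⟫
    have hsub : e i - x = (m / a) • (S i x - (a / m) • x) := by
      rw [smul_sub, smul_smul, div_mul_div_comm, mul_comm m, div_self (mul_pos (ha i) hm).ne',
        one_smul]
    rw [hsub, norm_smul, mul_pow, Real.norm_eq_abs, sq_abs]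
    calc (m / a) ^ 2 * ‖S i x - (a / m) • x‖ ^ 2 ≤ (m / a) ^ 2 * (c i * a) := by gcongr
      _ = c i * (m ^ 2 / a) := by field_simp
      _ ≤ c i * (W x + c i) := by
        gcongr
        exacts [hc i, (div_le_iff₀ (ha i)).2 (by linarith [hlow i])]
  have hup (i : ι) : ⟪x, S i x⟫ * W (e i) ≤ m ^ 2 := by
    have h := hbound i (e i)
    simp only [e, map_smul, LinearEquiv.symm_apply_apply, real_inner_smul_right,
      real_inner_comm x] at h
    set a := ⟪x, S i x⟫
    have ha₀ : a ≠ 0 := (ha i).ne'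
    calc a * W (e i) ≤ a * (m / a * (m / a * a)) := mul_le_mul_of_nonneg_left h (ha i).le
      _ = m ^ 2 := by field_simp
  exact tendsto_of_mul_le_of_le_mul hWx (hW.tendsto.comp he_lim)
    (by simpa using tendsto_const_nhds.add hc₀) hup hlow

end

theorem weak_G_closure_unimode_general
    {V : Type*} [NormedAddCommGroup V] [InnerProductSpace ℝ V]
    (ε0 : V) (hε0 : ε0 ≠ 0)
    (Wt : V → ℝ) (hWtcont : Continuous Wt) (hWtpos : 0 < Wt ε0)
    (c : ℕ → ℝ) (hc_nonneg : ∀ n, 0 ≤ c n)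
    (hc_lim : Filter.Tendsto c Filter.atTop (nhds 0))
    (S : ℕ → (V ≃ₗ[ℝ] V))
    (hS_sa : ∀ n, ∀ u v : V, ⟪(S n) u, v⟫ = ⟪u, (S n) v⟫)
    (hS_pd : ∀ n, ∀ u : V, u ≠ 0 → 0 < ⟪u, (S n) u⟫)
    (hbound : ∀ n, ∀ ε : V, Wt ε ≤ ⟪ε, (S n).symm ε⟫)
    (hattain : ∀ n, ⟪ε0, (S n).symm ε0⟫ ≤ Wt ε0 + c n)
    (hsmall : ∀ n, ∀ s : V, ⟪s, ε0⟫ = 0 → ⟪s, (S n) s⟫ ≤ c n * ‖s‖ ^ 2) :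
    ∀ σ0 : V, ⟪ε0, σ0⟫ = Wt ε0 →
      Filter.Tendsto (fun n => (S n) σ0) Filter.atTop (nhds ε0) := by
  intro σ0 hσ0
  have hS (n : ℕ) : (S n : V →ₗ[ℝ] V).IsPositive := by
    refine (LinearMap.isPositive_iff _).2 ⟨hS_sa n, fun u => ?_⟩
    rcases eq_or_ne u 0 with rfl | hu
    · simp
    · exact real_inner_comm u (S n u) ▸ (hS_pd n u hu).le
  have ha := tendsto_inner_map_self hε0 hWtcont.continuousAt hWtpos hc_nonneg hc_lim hS hbound
    hattain hsmall
  have h := tendsto_map_of_tendsto_inner hS hc_nonneg hc_lim hsmall ha σ0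
  rwa [hσ0, mul_div_cancel₀ _ hWtpos.ne', div_self (by positivity), one_smul] at h

/-- Abstract core of Theorem 4 of Milton & Camar-Eddine: if `Sₙ` are self-adjoint
positive definite (compliance) operators nearly attaining the elastic energy bound `W̃`
at `ε⁰` and with small compliance on the orthogonal complement of `ε⁰`, then for every
`σ⁰` with `⟪ε⁰, σ⁰⟫ = W̃ ε⁰` one has `Sₙ σ⁰ → ε⁰`. -/
theorem weak_G_closure_unimode
    {V : Type*} [NormedAddCommGroup V] [InnerProductSpace ℝ V] [FiniteDimensional ℝ V]
    (ε0 : V) (hε0 : ε0 ≠ 0)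
    (Wt : V → ℝ) (hWtcont : Continuous Wt) (hWtpos : 0 < Wt ε0)
    (c : ℕ → ℝ) (hc_nonneg : ∀ n, 0 ≤ c n)
    (hc_lim : Filter.Tendsto c Filter.atTop (nhds 0))
    (S : ℕ → (V ≃ₗ[ℝ] V))
    (hS_sa : ∀ n, ∀ u v : V, ⟪(S n) u, v⟫ = ⟪u, (S n) v⟫)
    (hS_pd : ∀ n, ∀ u : V, u ≠ 0 → 0 < ⟪u, (S n) u⟫)
    (hbound : ∀ n, ∀ ε : V, Wt ε ≤ ⟪ε, (S n).symm ε⟫)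
    (hattain : ∀ n, ⟪ε0, (S n).symm ε0⟫ ≤ Wt ε0 + c n)
    (hsmall : ∀ n, ∀ s : V, ⟪s, ε0⟫ = 0 → ⟪s, (S n) s⟫ ≤ c n * ‖s‖ ^ 2) :
    ∀ σ0 : V, ⟪ε0, σ0⟫ = Wt ε0 →
      Filter.Tendsto (fun n => (S n) σ0) Filter.atTop (nhds ε0) :=
  weak_G_closure_unimode_general ε0 hε0 Wt hWtcont hWtpos c hc_nonneg hc_lim S hS_sa hS_pd hbound
    hattain hsmall
end

section
/- Let V be a finite-dimensional real inner product space, let σ⁰ ∈ V with σ⁰ ≠ 0, and let W : V → ℝ be a continuous function with W(σ⁰) > 0. Let (cₙ) be a sequence of nonnegative real numbers with cₙ → 0, and for each n let Cₙ : V → V be a self-adjoint positive definite linear operator such that: (i) W(σ) ≤ ⟨σ, Cₙ⁻¹σ⟩ for every σ ∈ V; (ii) ⟨σ⁰, Cₙ⁻¹σ⁰⟩ ≤ W(σ⁰) + cₙ; (iii) ⟨e, Cₙe⟩ ≤ cₙ‖e‖² for every e ∈ V with ⟨e, σ⁰⟩ = 0. Then ⟨σ⁰, Cₙσ⁰⟩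 converges to ‖σ⁰‖⁴ / W(σ⁰). -/
/-!
Write `A = ⟪σ, C σ⟫`. Cauchy–Schwarz for the form `⟪·, C ·⟫` gives
`‖σ‖⁴ ≤ A ⟪σ, C⁻¹ σ⟫ ≤ A (W σ + c)`, the lower bound. For the upper bound, the stress
`τ = (‖σ‖² / A) C σ` has complementary energy `‖σ‖⁴ / A ≥ W τ`. The defect `τ - σ` is orthogonal
to `σ`, where `C` is at most `c`, and its `C⁻¹`-energy is at most `⟪σ, C⁻¹ σ⟫`; Cauchy–Schwarz
once more gives `‖τ - σ‖² ≤ c (W σ + c) → 0`, so `W τ → W σ` by continuity.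
-/

open scoped RealInnerProductSpace

open Filter Topology

theorem tendsto_zero_of_norm_sq_le {E ι : Type*} [SeminormedAddCommGroup E] {l : Filter ι}
    {x : ι → E} {u : ι → ℝ} (hu : Tendsto u l (𝓝 0)) (hxu : ∀ i, ‖x i‖ ^ 2 ≤ u i) :
    Tendsto x l (𝓝 0) := by
  rw [tendsto_zero_iff_norm_tendsto_zero]
  refine squeeze_zero (fun _ => norm_nonneg _) (fun i => ?_) (by simpa using hu.sqrt)
  simpa using Real.abs_le_sqrt (hxu i)

section

variable {V : Type*} [NormedAddCommGroup V] [InnerProductSpace ℝ V]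

namespace LinearMap.IsPositive

variable {C : V ≃ₗ[ℝ] V}

/-- Cauchy–Schwarz for the form `⟪x, C y⟫`, applied to `x` and `C⁻¹ x`. -/
theorem norm_pow_four_le_inner_mul_inner_symm (hC : (C : V →ₗ[ℝ] V).IsPositive) (x : V) :
    ‖x‖ ^ 4 ≤ ⟪x, C x⟫ * ⟪x, C.symm x⟫ := by
  have h := LinearMap.BilinForm.apply_mul_apply_le_of_forall_zero_le
    ((innerₗ V).compl₂ (C : V →ₗ[ℝ] V)) hC.inner_nonneg_right x (C.symm x)
  have hsymm : ⟪C.symm x, C x⟫ = ⟪x, x⟫ := by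
    simpa using (hC.isSymmetric (C.symm x) x).symm
  simp only [LinearMap.compl₂_apply, innerₗ_apply_apply, LinearEquiv.coe_coe,
    LinearEquiv.apply_symm_apply, hsymm, real_inner_comm x (C.symm x)] at h
  rw [real_inner_self_eq_norm_sq] at h
  linarith

theorem norm_sq_le_mul_of_inner_le (hC : (C : V →ₗ[ℝ] V).IsPositive) {c B : ℝ} (hc : 0 ≤ c)
    {e : V} (hCe : ⟪e, C e⟫ ≤ c * ‖e‖ ^ 2) (hCe_symm : ⟪e, C.symm e⟫ ≤ B) :
    ‖e‖ ^ 2 ≤ c * B := by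
  rcases eq_or_ne e 0 with rfl | he
  · simp only [inner_zero_left] at hCe_symm
    simpa using mul_nonneg hc hCe_symm
  have hsymm_nonneg : 0 ≤ ⟪e, C.symm e⟫ := hC.toLinearMap_symm.inner_nonneg_right e
  have h4 : ‖e‖ ^ 2 * ‖e‖ ^ 2 ≤ c * B * ‖e‖ ^ 2 := calc
    ‖e‖ ^ 2 * ‖e‖ ^ 2 = ‖e‖ ^ 4 := by ring
    _ ≤ ⟪e, C e⟫ * ⟪e, C.symm e⟫ := hC.norm_pow_four_le_inner_mul_inner_symm e
    _ ≤ c * ‖e‖ ^ 2 * B :=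
        mul_le_mul hCe hCe_symm hsymm_nonneg (hC.inner_nonneg_right e |>.trans hCe)
    _ = c * B * ‖e‖ ^ 2 := by ring
  exact le_of_mul_le_mul_right h4 (by positivity)

end LinearMap.IsPositive

/-- The minimiser of `⟪τ, C⁻¹ τ⟫` on the hyperplane `⟪τ, σ⟫ = ‖σ‖ ^ 2`. -/
noncomputable def dualStress (C : V ≃ₗ[ℝ] V) (σ : V) : V :=
  (‖σ‖ ^ 2 / ⟪σ, C σ⟫) • C σ

variable {C : V ≃ₗ[ℝ] V} {σ : V}

theorem inner_dualStress_sub_self (hA : ⟪σ, C σ⟫ ≠ 0) : ⟪dualStress C σ - σ, σ⟫ = 0 := by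
  rw [dualStress, inner_sub_left, real_inner_smul_left, real_inner_comm σ, div_mul_cancel₀ _ hA,
    real_inner_self_eq_norm_sq, sub_self]

theorem inner_dualStress_symm_dualStress (hA : ⟪σ, C σ⟫ ≠ 0) :
    ⟪dualStress C σ, C.symm (dualStress C σ)⟫ = ‖σ‖ ^ 4 / ⟪σ, C σ⟫ := by
  rw [dualStress, map_smul, LinearEquiv.symm_apply_apply, real_inner_smul_left,
    real_inner_smul_right, real_inner_comm σ]
  field_simp

theorem inner_dualStress_sub_symm_dualStress_sub (hC : (C : V →ₗ[ℝ] V).IsPositive)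
    (hA : ⟪σ, C σ⟫ ≠ 0) :
    ⟪dualStress C σ - σ, C.symm (dualStress C σ - σ)⟫ = ⟪σ, C.symm σ⟫ - ‖σ‖ ^ 4 / ⟪σ, C σ⟫ := by
  have hcross : ⟪C σ, C.symm σ⟫ = ‖σ‖ ^ 2 := by
    simpa [real_inner_self_eq_norm_sq] using hC.isSymmetric σ (C.symm σ)
  rw [map_sub, inner_sub_left, inner_sub_right, inner_sub_right,
    inner_dualStress_symm_dualStress hA, dualStress, map_smul, LinearEquiv.symm_apply_apply,
    real_inner_smul_left, real_inner_smul_right, hcross, real_inner_self_eq_norm_sq]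
  field_simp
  ring

theorem norm_dualStress_sub_sq_le (hC : (C : V →ₗ[ℝ] V).IsPositive) (hA : 0 < ⟪σ, C σ⟫)
    {c : ℝ} (hc : 0 ≤ c) (hsmall : ∀ e : V, ⟪e, σ⟫ = 0 → ⟪e, C e⟫ ≤ c * ‖e‖ ^ 2) :
    ‖dualStress C σ - σ‖ ^ 2 ≤ c * ⟪σ, C.symm σ⟫ := by
  refine hC.norm_sq_le_mul_of_inner_le hc (hsmall _ (inner_dualStress_sub_self hA.ne')) ?_
  rw [inner_dualStress_sub_symm_dualStress_sub hC hA.ne', sub_le_self_iff]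
  positivity

end

theorem energy_on_sigma0_tendsto_general
    {V : Type*} [NormedAddCommGroup V] [InnerProductSpace ℝ V]
    (σ0 : V) (hσ0 : σ0 ≠ 0)
    (W : V → ℝ) (hWcont : Continuous W) (hWpos : 0 < W σ0)
    (c : ℕ → ℝ) (hc_nonneg : ∀ n, 0 ≤ c n)
    (hc_lim : Filter.Tendsto c Filter.atTop (nhds 0))
    (C : ℕ → (V ≃ₗ[ℝ] V))
    (hC_sa : ∀ n, ∀ u v : V, ⟪(C n) u, v⟫ = ⟪u, (C n) v⟫)
    (hC_pd : ∀ n, ∀ u : V, u ≠ 0 → 0 < ⟪u, (C n) u⟫)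
    (hbound : ∀ n, ∀ σ : V, W σ ≤ ⟪σ, (C n).symm σ⟫)
    (hattain : ∀ n, ⟪σ0, (C n).symm σ0⟫ ≤ W σ0 + c n)
    (hsmall : ∀ n, ∀ e : V, ⟪e, σ0⟫ = 0 → ⟪e, (C n) e⟫ ≤ c n * ‖e‖ ^ 2) :
    Filter.Tendsto (fun n => ⟪σ0, (C n) σ0⟫) Filter.atTop
      (nhds (‖σ0‖ ^ 4 / W σ0)) := by
  have hA n : 0 < ⟪σ0, C n σ0⟫ := hC_pd n σ0 hσ0
  have hC n : (C n : V →ₗ[ℝ] V).IsPositive := by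
    refine (LinearMap.isPositive_iff _).2 ⟨hC_sa n, fun u => ?_⟩
    rcases eq_or_ne u 0 with rfl | hu
    · simp
    · simpa [real_inner_comm] using (hC_pd n u hu).le
  have hWc : Tendsto (fun n => W σ0 + c n) atTop (𝓝 (W σ0)) := by
    simpa using hc_lim.const_add (W σ0)
  have hτ : Tendsto (fun n => dualStress (C n) σ0) atTop (𝓝 σ0) := by
    have hτσ := tendsto_zero_of_norm_sq_le (by simpa using hc_lim.mul hWc) fun n =>
      (norm_dualStress_sub_sq_le (hC n) (hA n) (hc_nonneg n) (hsmall n)).trans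
        (mul_le_mul_of_nonneg_left (hattain n) (hc_nonneg n))
    simpa using hτσ.add_const σ0
  have hWτ : Tendsto (fun n => W (dualStress (C n) σ0)) atTop (𝓝 (W σ0)) :=
    (hWcont.tendsto σ0).comp hτ
  have hlower n : ‖σ0‖ ^ 4 / (W σ0 + c n) ≤ ⟪σ0, C n σ0⟫ := by
    rw [div_le_iff₀ (by linarith [hc_nonneg n])]
    exact ((hC n).norm_pow_four_le_inner_mul_inner_symm σ0).trans
      (mul_le_mul_of_nonneg_left (hattain n) (hA n).le)
  have hupper : ∀ᶠ n in atTop, ⟪σ0, C n σ0⟫ ≤ ‖σ0‖ ^ 4 / W (dualStress (C n) σ0) := by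
    filter_upwards [hWτ.eventually (eventually_gt_nhds hWpos)] with n hn
    rw [le_div_iff₀ hn, ← le_div_iff₀' (hA n), ← inner_dualStress_symm_dualStress (hA n).ne']
    exact hbound n _
  exact tendsto_of_tendsto_of_tendsto_of_le_of_le'
    (tendsto_const_nhds.div hWc hWpos.ne') (tendsto_const_nhds.div hWτ hWpos.ne')
    (Eventually.of_forall hlower) hupper

/-- Coordinate-free form of (1.29): under the near-optimality hypotheses,
`⟪σ⁰, Cₙσ⁰⟫ → ‖σ⁰‖⁴ / W σ⁰`. -/
theorem energy_on_sigma0_tendsto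
    {V : Type*} [NormedAddCommGroup V] [InnerProductSpace ℝ V] [FiniteDimensional ℝ V]
    (σ0 : V) (hσ0 : σ0 ≠ 0)
    (W : V → ℝ) (hWcont : Continuous W) (hWpos : 0 < W σ0)
    (c : ℕ → ℝ) (hc_nonneg : ∀ n, 0 ≤ c n)
    (hc_lim : Filter.Tendsto c Filter.atTop (nhds 0))
    (C : ℕ → (V ≃ₗ[ℝ] V))
    (hC_sa : ∀ n, ∀ u v : V, ⟪(C n) u, v⟫ = ⟪u, (C n) v⟫)
    (hC_pd : ∀ n, ∀ u : V, u ≠ 0 → 0 < ⟪u, (C n) u⟫)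
    (hbound : ∀ n, ∀ σ : V, W σ ≤ ⟪σ, (C n).symm σ⟫)
    (hattain : ∀ n, ⟪σ0, (C n).symm σ0⟫ ≤ W σ0 + c n)
    (hsmall : ∀ n, ∀ e : V, ⟪e, σ0⟫ = 0 → ⟪e, (C n) e⟫ ≤ c n * ‖e‖ ^ 2) :
    Filter.Tendsto (fun n => ⟪σ0, (C n) σ0⟫) Filter.atTop
      (nhds (‖σ0‖ ^ 4 / W σ0)) :=
  energy_on_sigma0_tendsto_general σ0 hσ0 W hWcont hWpos c hc_nonneg hc_lim C hC_sa hC_pd hbound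
    hattain hsmall
end
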